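/- arXiv:1109.3928 — 3 statements merged into one kernel-verified Lean document; each statement's English description precedes it below -/
import Mathlib

section
/- For n ≡ 1 or 3 (mod 4) with n ≥ 3, the total domination number and the paired domination number of C_n × C_4 both equal n + 1. -/
open SimpleGraph

/-- The toroidal mesh `C_n × C_m`: Cartesian product of two cycles, with
vertex set `ZMod n × ZMod m`. -/
def torusGraph (n m : ℕ) : SimpleGraph (ZMod n × ZMod m) where
  Adj a b := a ≠ b ∧ ((a.1 = b.1 ∧ (a.2 = b.2 + 1 ∨ b.2 = a.2 + 1)) ∨
    (a.2 = b.2 ∧ (a.1 = b.1 + 1 ∨ b.1 = a.1 + 1)))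
  symm := by
    constructor
    intro a b h
    obtain ⟨hne, h⟩ := h
    refine ⟨hne.symm, ?_⟩
    rcases h with ⟨h1, h2⟩ | ⟨h1, h2⟩
    · exact Or.inl ⟨h1.symm, h2.symm⟩
    · exact Or.inr ⟨h1.symm, h2.symm⟩
  loopless := by constructor; intro a h; exact h.1 rfl

/-- `D` is a total dominating set of `G`: every vertex has a neighbor in `D`. -/
def IsTotalDomSet {V : Type*} (G : SimpleGraph V) (D : Set V) : Prop :=
  ∀ v : V, ∃ u ∈ D, G.Adj v u

/-- `D` is a dominating set of `G`: every vertex outside `D` has a neighbor in `D`. -/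
def IsDomSet {V : Type*} (G : SimpleGraph V) (D : Set V) : Prop :=
  ∀ v : V, v ∉ D → ∃ u ∈ D, G.Adj v u

/-- `D` is a paired dominating set: a dominating set whose induced subgraph
has a perfect matching. -/
def IsPairedDomSet {V : Type*} (G : SimpleGraph V) (D : Set V) : Prop :=
  IsDomSet G D ∧ ∃ M : (G.induce D).Subgraph, M.IsPerfectMatching

/-- The total domination number. -/
noncomputable def totalDomNum {V : Type*} (G : SimpleGraph V) : ℕ :=
  sInf {k | ∃ D : Set V, IsTotalDomSet G D ∧ D.ncard = k}

/-- The paired domination number. -/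
noncomputable def pairedDomNum {V : Type*} (G : SimpleGraph V) : ℕ :=
  sInf {k | ∃ D : Set V, IsPairedDomSet G D ∧ D.ncard = k}

/-- The domination number. -/
noncomputable def domNum {V : Type*} (G : SimpleGraph V) : ℕ :=
  sInf {k | ∃ D : Set V, IsDomSet G D ∧ D.ncard = k}

/-! `C_n × C_4` is 4-regular on `4n` vertices, so a total dominating set `D` has `|D| ≥ n`, and
if `|D| = n` then every vertex has exactly one neighbour in `D`. In particular adjacency matches
the vertices of `D` in pairs, so `|D|` is even, impossible for odd `n`. Conversely, vertical
dominoes in the even columns `0, 2, …, n - 1`, placed alternately in rows `{0, 1}` and `{2, 3}`,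
form a paired dominating set of size `n + 1`: each odd column lies between two even columns whose
dominoes cover complementary rows. A paired dominating set is total, so both numbers are `n + 1`.
-/

open scoped Finset

section

variable {V : Type*} {G : SimpleGraph V}

theorem IsTotalDomSet.isDomSet {D : Set V} (hD : IsTotalDomSet G D) : IsDomSet G D :=
  fun v _ => hD v

theorem IsPairedDomSet.isTotalDomSet {D : Set V} (hD : IsPairedDomSet G D) :
    IsTotalDomSet G D := by
  obtain ⟨hdom, M, hM⟩ := hD
  intro v
  by_cases hv : v ∈ D
  · obtain ⟨w, hw, -⟩ := hM.1 (hM.2 ⟨v, hv⟩)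
    exact ⟨w, w.2, M.adj_sub hw⟩
  · exact hdom v hv

theorem SimpleGraph.exists_isPerfectMatching_induce_of_involution {s : Set V} (σ : V → V)
    (hσ : ∀ v ∈ s, σ v ∈ s) (hinv : ∀ v ∈ s, σ (σ v) = v) (hadj : ∀ v ∈ s, G.Adj v (σ v)) :
    ∃ M : (G.induce s).Subgraph, M.IsPerfectMatching := by
  let M : (G.induce s).Subgraph :=
    { verts := Set.univ
      Adj := fun a b => b.1 = σ a.1
      adj_sub := fun {a _} h => by simpa [h] using hadj a a.2
      edge_vert := fun _ => trivial
      symm := ⟨fun a _ h => by simp only [h, hinv a a.2]⟩ }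
  refine ⟨M, Subgraph.isPerfectMatching_iff.2 fun v => ⟨⟨σ v, hσ v v.2⟩, rfl, ?_⟩⟩
  exact fun w hw => Subtype.ext hw

theorem SimpleGraph.even_card_of_existsUnique_adj {s : Finset V}
    (h : ∀ v ∈ s, ∃! u, u ∈ s ∧ G.Adj v u) : Even s.card := by
  have hM : (⊤ : (G.induce (s : Set V)).Subgraph).IsPerfectMatching := by
    refine Subgraph.isPerfectMatching_iff.2 fun v => ?_
    obtain ⟨u, ⟨hu, hvu⟩, huniq⟩ := h v v.2
    exact ⟨⟨u, hu⟩, hvu, fun w hw => Subtype.ext (huniq w ⟨w.2, hw⟩)⟩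
  simpa using hM.even_card

theorem IsTotalDomSet.one_le_card_filter_adj [DecidableRel G.Adj] {s : Finset V}
    (hs : IsTotalDomSet G s) (v : V) : 1 ≤ #{u ∈ s | G.Adj v u} := by
  obtain ⟨u, hu, hvu⟩ := hs v
  exact Finset.card_pos.2 ⟨u, Finset.mem_filter.2 ⟨hu, hvu⟩⟩

variable [Fintype V] [DecidableRel G.Adj]

theorem SimpleGraph.sum_card_filter_adj (s : Finset V) :
    ∑ v, #{u ∈ s | G.Adj v u} = ∑ u ∈ s, G.degree u := by
  change ∑ v, #(s.bipartiteAbove G.Adj v) = _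
  rw [Finset.sum_card_bipartiteAbove_eq_sum_card_bipartiteBelow]
  refine Finset.sum_congr rfl fun u _ => ?_
  simp [Finset.bipartiteBelow, ← card_neighborFinset_eq_degree, neighborFinset_eq_filter, adj_comm]

theorem SimpleGraph.sum_card_filter_adj_le {k : ℕ} (hdeg : ∀ v, G.degree v ≤ k) (s : Finset V) :
    ∑ v, #{u ∈ s | G.Adj v u} ≤ k * #s := by
  rw [SimpleGraph.sum_card_filter_adj, mul_comm, ← smul_eq_mul, ← Finset.sum_const]
  exact Finset.sum_le_sum fun u _ => hdeg u

theorem IsTotalDomSet.card_le_mul_card {k : ℕ} (hdeg : ∀ v, G.degree v ≤ k) {s : Finset V}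
    (hs : IsTotalDomSet G s) : Fintype.card V ≤ k * #s :=
  calc Fintype.card V = ∑ _v : V, 1 := by simp
    _ ≤ ∑ v, #{u ∈ s | G.Adj v u} := Finset.sum_le_sum fun v _ => hs.one_le_card_filter_adj v
    _ ≤ k * #s := SimpleGraph.sum_card_filter_adj_le hdeg s

theorem IsTotalDomSet.existsUnique_adj_of_card_eq {k : ℕ} (hdeg : ∀ v, G.degree v ≤ k)
    {s : Finset V} (hs : IsTotalDomSet G s) (hcard : Fintype.card V = k * #s) (v : V) :
    ∃! u, u ∈ s ∧ G.Adj v u := by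
  have hsum : ∑ _v : V, 1 = ∑ v, #{u ∈ s | G.Adj v u} := by
    refine le_antisymm (Finset.sum_le_sum fun v _ => hs.one_le_card_filter_adj v) ?_
    simpa [hcard] using SimpleGraph.sum_card_filter_adj_le hdeg s
  obtain ⟨u, hu⟩ := Finset.card_eq_one.1
    ((Finset.sum_eq_sum_iff_of_le fun v _ => hs.one_le_card_filter_adj v).1 hsum v
      (Finset.mem_univ v)).symm
  refine ⟨u, Finset.mem_filter.1 (hu ▸ Finset.mem_singleton_self u), fun w hw => ?_⟩
  exact Finset.mem_singleton.1 (hu ▸ Finset.mem_filter.2 hw)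

end

instance (n m : ℕ) : DecidableRel (torusGraph n m).Adj := fun _ _ => by
  unfold torusGraph; infer_instance

section Torus

variable {n m : ℕ}

theorem torusGraph_adj_of_fst_eq {a b : ZMod n × ZMod m} (h1 : a.1 = b.1) (hne : a.2 ≠ b.2)
    (h : a.2 = b.2 + 1 ∨ b.2 = a.2 + 1) : (torusGraph n m).Adj a b :=
  ⟨fun hab => hne (congrArg Prod.snd hab), Or.inl ⟨h1, h⟩⟩

theorem torusGraph_adj_of_snd_eq {a b : ZMod n × ZMod m} (h2 : a.2 = b.2) (hne : a.1 ≠ b.1)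
    (h : a.1 = b.1 + 1 ∨ b.1 = a.1 + 1) : (torusGraph n m).Adj a b :=
  ⟨fun hab => hne (congrArg Prod.fst hab), Or.inr ⟨h2, h⟩⟩

theorem torusGraph_degree_le [NeZero n] [NeZero m] (v : ZMod n × ZMod m) :
    (torusGraph n m).degree v ≤ 4 := by
  rw [← card_neighborFinset_eq_degree]
  refine (Finset.card_le_card
    (t := {(v.1, v.2 + 1), (v.1, v.2 - 1), (v.1 + 1, v.2), (v.1 - 1, v.2)})
    fun w hw => ?_).trans Finset.card_le_four
  obtain ⟨x, y⟩ := v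
  obtain ⟨x', y'⟩ := w
  obtain ⟨-, ⟨h1, h2 | h2⟩ | ⟨h2, h1 | h1⟩⟩ := (mem_neighborFinset _ _ _).1 hw <;>
    simp only at h1 h2 <;> subst h1 h2 <;> simp

theorem lt_ncard_of_isTotalDomSet_torusGraph (hn : Odd n) {D : Set (ZMod n × ZMod 4)}
    (hD : IsTotalDomSet (torusGraph n 4) D) : n < D.ncard := by
  have : NeZero n := ⟨hn.pos.ne'⟩
  obtain ⟨s, rfl⟩ := D.toFinite.exists_finset_coe
  rw [Set.ncard_coe_finset]
  have hcard : Fintype.card (ZMod n × ZMod 4) = 4 * n := by simp [ZMod.card, mul_comm]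
  have hle : n ≤ #s := by have := hD.card_le_mul_card torusGraph_degree_le; omega
  refine hle.lt_of_ne fun heq => Nat.not_even_iff_odd.2 hn ?_
  rw [heq]
  exact SimpleGraph.even_card_of_existsUnique_adj fun v _ =>
    hD.existsUnique_adj_of_card_eq torusGraph_degree_le (by rw [hcard, ← heq]) v

def dominoSet (n : ℕ) : Set (ZMod n × ZMod 4) :=
  {p | p.1.val % 2 = 0 ∧ p.2.val / 2 = p.1.val / 2 % 2}

theorem ncard_dominoSet (hn : Odd n) : (dominoSet n).ncard = n + 1 := by
  have : NeZero n := ⟨hn.pos.ne'⟩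
  have hodd := Nat.odd_iff.1 hn
  refine Set.ncard_eq_of_bijective
    (fun j _ => (((2 * (j / 2) : ℕ) : ZMod n), ((2 * (j / 2 % 2) + j % 2 : ℕ) : ZMod 4)))
    ?_ ?_ ?_
  · rintro ⟨x, y⟩ ⟨hx, hy⟩
    dsimp only at hx hy
    have := x.val_lt
    have := y.val_lt
    refine ⟨x.val + y.val % 2, by omega, ?_⟩
    simp only [show 2 * ((x.val + y.val % 2) / 2) = x.val by omega,
      show 2 * ((x.val + y.val % 2) / 2 % 2) + (x.val + y.val % 2) % 2 = y.val by omega,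
      ZMod.natCast_zmod_val]
  · intro j hj
    simp only [dominoSet, Set.mem_ofPred_eq, ZMod.val_natCast,
      Nat.mod_eq_of_lt (by omega : 2 * (j / 2) < n)]
    omega
  · intro i j hi hj h
    have h1 := congrArg (fun p => p.1.val) h
    have h2 := congrArg (fun p => p.2.val) h
    simp only [ZMod.val_natCast, Nat.mod_eq_of_lt (by omega : 2 * (i / 2) < n),
      Nat.mod_eq_of_lt (by omega : 2 * (j / 2) < n)] at h1 h2
    omega

theorem exists_even_column_adj (hn : Odd n) {x : ZMod n} (hx : x.val % 2 = 1) {r : ℕ}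
    (hr : r < 2) : ∃ x' : ZMod n, x'.val % 2 = 0 ∧ x'.val / 2 % 2 = r ∧ x ≠ x' ∧
      (x = x' + 1 ∨ x' = x + 1) := by
  have : NeZero n := ⟨hn.pos.ne'⟩
  have hlt : x.val + 1 < n := by have := x.val_lt; have := Nat.odd_iff.1 hn; omega
  by_cases hl : (x.val - 1) / 2 % 2 = r
  · have hval : ((x.val - 1 : ℕ) : ZMod n).val = x.val - 1 := ZMod.val_cast_of_lt (by omega)
    refine ⟨(x.val - 1 : ℕ), by omega, by omega, fun h => ?_, Or.inl ?_⟩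
    · rw [← h] at hval; omega
    · rw [← Nat.cast_add_one, Nat.sub_add_cancel (by omega), ZMod.natCast_zmod_val]
  · have hval : ((x.val + 1 : ℕ) : ZMod n).val = x.val + 1 := ZMod.val_cast_of_lt hlt
    refine ⟨(x.val + 1 : ℕ), by omega, by omega, fun h => ?_, Or.inr ?_⟩
    · rw [← h] at hval; omega
    · rw [Nat.cast_add_one, ZMod.natCast_zmod_val]

theorem ZMod.exists_val_div_two_eq_adj_four : ∀ y : ZMod 4, ∀ r < 2, ∃ y' : ZMod 4,
    y'.val / 2 = r ∧ y ≠ y' ∧ (y = y' + 1 ∨ y' = y + 1) := by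
  decide

theorem isTotalDomSet_dominoSet (hn : Odd n) :
    IsTotalDomSet (torusGraph n 4) (dominoSet n) := by
  rintro ⟨x, y⟩
  rcases Nat.mod_two_eq_zero_or_one x.val with hx | hx
  · obtain ⟨y', hy', hne, hadj⟩ :=
      ZMod.exists_val_div_two_eq_adj_four y (x.val / 2 % 2) (Nat.mod_lt _ two_pos)
    exact ⟨(x, y'), ⟨hx, hy'⟩, torusGraph_adj_of_fst_eq rfl hne hadj⟩
  · obtain ⟨x', hx', hr, hne, hadj⟩ :=
      exists_even_column_adj hn hx (r := y.val / 2) (by have := y.val_lt; omega)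
    exact ⟨(x', y), ⟨hx', hr.symm⟩, torusGraph_adj_of_snd_eq rfl hne hadj⟩

def dominoPartner (y : ZMod 4) : ZMod 4 :=
  if y.val % 2 = 0 then y + 1 else y - 1

theorem dominoPartner_val_div_two : ∀ y, (dominoPartner y).val / 2 = y.val / 2 := by
  decide

theorem dominoPartner_dominoPartner : ∀ y, dominoPartner (dominoPartner y) = y := by
  decide

theorem dominoPartner_adj : ∀ y, y ≠ dominoPartner y ∧
    (y = dominoPartner y + 1 ∨ dominoPartner y = y + 1) := by
  decide

theorem isPairedDomSet_dominoSet (hn : Odd n) :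
    IsPairedDomSet (torusGraph n 4) (dominoSet n) :=
  ⟨(isTotalDomSet_dominoSet hn).isDomSet,
    SimpleGraph.exists_isPerfectMatching_induce_of_involution
      (fun p => (p.1, dominoPartner p.2))
      (fun p hp => ⟨hp.1, (dominoPartner_val_div_two p.2).trans hp.2⟩)
      (fun p _ => by simp only [dominoPartner_dominoPartner])
      (fun p _ => torusGraph_adj_of_fst_eq rfl (dominoPartner_adj p.2).1
        (dominoPartner_adj p.2).2)⟩

end Torus

theorem stmt5_general (n : ℕ) (h : n % 4 = 1 ∨ n % 4 = 3) :
    totalDomNum (torusGraph n 4) = n + 1 ∧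
    pairedDomNum (torusGraph n 4) = n + 1 := by
  have hn : Odd n := Nat.odd_iff.2 (by omega)
  refine ⟨IsLeast.csInf_eq ⟨⟨_, isTotalDomSet_dominoSet hn, ncard_dominoSet hn⟩, ?_⟩,
    IsLeast.csInf_eq ⟨⟨_, isPairedDomSet_dominoSet hn, ncard_dominoSet hn⟩, ?_⟩⟩
  · rintro _ ⟨D, hD, rfl⟩
    exact lt_ncard_of_isTotalDomSet_torusGraph hn hD
  · rintro _ ⟨D, hD, rfl⟩
    exact lt_ncard_of_isTotalDomSet_torusGraph hn hD.isTotalDomSet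

theorem stmt5 (n : ℕ) (hn : 3 ≤ n) (h : n % 4 = 1 ∨ n % 4 = 3) :
    totalDomNum (torusGraph n 4) = n + 1 ∧
    pairedDomNum (torusGraph n 4) = n + 1 :=
  stmt5_general n h
end

section
/- For all n ≥ 3 and m ≥ 3, the paired domination number satisfies γ_p(C_n × C_m) ≤ γ_p(C_{n+1} × C_m). -/
open SimpleGraph

/-!
Fold `C_{n+1}` onto `C_n` by identifying the last column with the first one. A minimum paired
dominating set `D'` of `C_{n+1} × C_m` maps onto a dominating set `F` of `C_n × C_m`. Discarding
one vertex of each pair of `D'` that lands on a single vertex, the perfect matching of `D'` survives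
on all of `F` except at most as many vertices as the fold lost, so `|F| + #unmatched ≤ |D'|`.
Each unmatched vertex is then matched at the cost of at most one new vertex, by augmenting along
an alternating path with a matching of the torus that misses only a vertex outside `F`. Such
matchings exist since `C_k` has, for every vertex, a matching covering all other vertices, and
box products inherit this property.
-/

open Finset

namespace SimpleGraph

variable {α β V : Type*}

/-- A matching covering `S`, encoded by its partner function (whose values off `S` are
irrelevant). -/
def IsMatchingOn (G : SimpleGraph V) (S : Set V) (p : V → V) : Prop :=
  ∀ v ∈ S, p v ∈ S ∧ p (p v) = v ∧ G.Adj v (p v)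

def AllButOneMatchable (G : SimpleGraph V) : Prop :=
  ∀ v₀, ∃ S ψ, G.IsMatchingOn S ψ ∧ ∀ v ≠ v₀, v ∈ S

section Matching

variable {G : SimpleGraph V} {S : Set V} {p ψ : V → V}

theorem IsMatchingOn.insert_pair [DecidableEq V] (hp : G.IsMatchingOn S p) {u z : V}
    (hu : u ∉ S) (hz : z ∉ S) (h : G.Adj u z) :
    G.IsMatchingOn (insert u (insert z S))
      fun v => if v = u then z else if v = z then u else p v := by
  have hzu : z ≠ u := h.ne.symm
  rintro v (rfl | rfl | hv)
  · simp [hzu, h]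
  · simp [hzu, h.symm]
  · obtain ⟨hpv, hppv, hadj⟩ := hp v hv
    have hne : ∀ w ∈ S, w ≠ u ∧ w ≠ z := fun w hw => ⟨ne_of_mem_of_not_mem hw hu,
      ne_of_mem_of_not_mem hw hz⟩
    simp [(hne v hv).1, (hne v hv).2, (hne _ hpv).1, (hne _ hpv).2, hpv, hppv, hadj]

theorem IsMatchingOn.diff_pair (hp : G.IsMatchingOn S p) {x : V} (hx : x ∈ S) :
    G.IsMatchingOn (S \ {x, p x}) p := by
  rintro v ⟨hv, hvx⟩
  simp only [Set.mem_insert_iff, Set.mem_singleton_iff, not_or] at hvx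
  obtain ⟨hpv, hppv, hadj⟩ := hp v hv
  refine ⟨⟨hpv, ?_⟩, hppv, hadj⟩
  simp only [Set.mem_insert_iff, Set.mem_singleton_iff, not_or]
  constructor
  · rintro h
    exact hvx.2 (by rw [← hppv, h])
  · rintro h
    exact hvx.1 (by rw [← hppv, h, (hp x hx).2.1])

theorem IsMatchingOn.restrict (hp : G.IsMatchingOn S p) {T : Set V} (hT : T ⊆ S) :
    G.IsMatchingOn {v ∈ T | p v ∈ T} p := by
  rintro v ⟨hv, hpv⟩
  obtain ⟨-, hppv, hadj⟩ := hp v (hT hv)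
  exact ⟨⟨hpv, hppv.symm ▸ hv⟩, hppv, hadj⟩

theorem IsMatchingOn.image {G' : SimpleGraph α} {K : Set α} {μ : α → α}
    (hμ : G'.IsMatchingOn K μ) {φ : α → V} (hinj : Set.InjOn φ K)
    (hadj : ∀ ⦃a b⦄, G'.Adj a b → φ a = φ b ∨ G.Adj (φ a) (φ b)) :
    ∃ q, G.IsMatchingOn (φ '' K) q := by
  rcases isEmpty_or_nonempty α with _ | _
  · exact ⟨id, by simp [Set.eq_empty_of_isEmpty K, IsMatchingOn]⟩
  refine ⟨φ ∘ μ ∘ Function.invFunOn φ K, ?_⟩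
  rintro _ ⟨a, ha, rfl⟩
  have hinv : ∀ b ∈ K, Function.invFunOn φ K (φ b) = b := fun b hb =>
    hinj.leftInvOn_invFunOn hb
  obtain ⟨hμa, hμμa, hG'⟩ := hμ a ha
  simp only [Function.comp_apply, hinv a ha, hinv _ hμa, hμμa]
  exact ⟨Set.mem_image_of_mem φ hμa, trivial,
    (hadj hG').resolve_left fun h => hG'.ne (hinj ha hμa h)⟩

theorem isPairedDomSet_iff_exists_isMatchingOn {D : Set V} :
    IsPairedDomSet G D ↔ IsDomSet G D ∧ ∃ p, G.IsMatchingOn D p := by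
  classical
  refine and_congr_right fun _ => ⟨?_, ?_⟩
  · rintro ⟨M, hM⟩
    choose q hq using fun v : D => (hM.1 (hM.2 v)).exists
    have hqq : ∀ v, q (q v) = v := fun v =>
      (hM.1 (hM.2 (q v))).unique (hq (q v)) (hq v).symm
    refine ⟨fun v => if h : v ∈ D then q ⟨v, h⟩ else v, fun v hv => ?_⟩
    simp only [dif_pos hv, Subtype.coe_prop, Subtype.coe_eta, hqq]
    exact ⟨trivial, rfl, M.adj_sub (hq ⟨v, hv⟩)⟩
  · rintro ⟨p, hp⟩
    refine ⟨{ verts := Set.univ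
              Adj := fun x y => p x = y
              adj_sub := ?_
              edge_vert := fun _ => trivial
              symm := ⟨fun x y h => ?_⟩ }, fun v _ => ?_, fun _ => trivial⟩
    · rintro x y (h : p x = y)
      change G.Adj x y
      exact h ▸ (hp x x.2).2.2
    · change p x = y at h
      rw [← h, (hp x x.2).2.1]
    · exact ⟨⟨p v, (hp v v.2).1⟩, rfl, fun w (hw : p v = w) => Subtype.ext hw.symm⟩

theorem _root_.IsDomSet.mono {G : SimpleGraph V} {D E : Set V} (hD : IsDomSet G D) (h : D ⊆ E) :
    IsDomSet G E := fun v hv =>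
  (hD v fun hvD => hv (h hvD)).imp fun _ ⟨hu, hadj⟩ => ⟨h hu, hadj⟩

theorem AllButOneMatchable.exists_isPairedDomSet [Nontrivial V] (hG : G.AllButOneMatchable) :
    ∃ D, IsPairedDomSet G D := by
  obtain ⟨v₀, v₁, hne⟩ := exists_pair_ne V
  obtain ⟨S, ψ, hψ, hS⟩ := hG v₀
  obtain ⟨S', ψ', hψ', hS'⟩ := hG v₁
  refine ⟨S, isPairedDomSet_iff_exists_isMatchingOn.2 ⟨fun v hv => ?_, ψ, hψ⟩⟩
  obtain rfl : v = v₀ := by_contra fun h => hv (hS v h)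
  obtain ⟨-, -, hadj⟩ := hψ' v (hS' v hne)
  exact ⟨ψ' v, hS _ hadj.ne.symm, hadj⟩

theorem AllButOneMatchable.of_forall_iso {v₀ : V} (hψ : G.IsMatchingOn S ψ)
    (hS : ∀ v ≠ v₀, v ∈ S) (htrans : ∀ v, ∃ σ : G ≃g G, σ v₀ = v) :
    G.AllButOneMatchable := by
  intro v
  obtain ⟨σ, rfl⟩ := htrans v
  refine ⟨σ.symm ⁻¹' S, σ ∘ ψ ∘ σ.symm, fun w hw => ?_, fun w hw => hS _ ?_⟩
  · obtain ⟨h1, h2, h3⟩ := hψ _ hw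
    simp only [Set.mem_preimage, Function.comp_apply, RelIso.symm_apply_apply, h1, h2,
      RelIso.apply_symm_apply, true_and]
    simpa using σ.map_adj_iff.2 h3
  · rintro rfl
    exact hw (σ.apply_symm_apply w).symm

variable [DecidableEq V]

/-- Augmentation along the alternating path `u, ψ u, p (ψ u), ψ (p (ψ u)), …`, which can only
stop at a vertex `z ∉ C` because `ψ` is defined on all of `C`. -/
theorem IsMatchingOn.exists_augment (hψ : G.IsMatchingOn S ψ) (C : Finset V)
    (hp : G.IsMatchingOn C p) (hCS : ↑C ⊆ S) {u : V} (hu : u ∈ S) (huC : u ∉ C) :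
    ∃ z q, z ∉ C ∧ z ≠ u ∧ ψ z ∈ insert u C ∧
      G.IsMatchingOn ↑(insert u (insert z C)) q := by
  obtain ⟨hxS, hψψu, hadj⟩ := hψ u hu
  set x := ψ u
  by_cases hxC : x ∈ C
  swap
  · have hm := hp.insert_pair huC (mem_coe.not.2 hxC) hadj
    rw [← coe_insert, ← coe_insert] at hm
    exact ⟨x, _, hxC, hadj.ne.symm, by simp [hψψu], hm⟩
  obtain ⟨hyC, hpx, hxy⟩ := hp x hxC
  set y := p x
  rw [mem_coe] at hyC
  have hlt : #(C \ {x, y}) < #C :=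
    card_lt_card (sdiff_ssubset (by simp [insert_subset_iff, hxC, hyC]) (by simp))
  obtain ⟨z, q, hzC, hzy, hψz, hq⟩ := hψ.exists_augment (C \ {x, y})
    (by simpa using hp.diff_pair hxC) (fun v hv => hCS (mem_sdiff.1 hv).1)
    (hCS hyC) (by simp)
  have huy : u ≠ y := ne_of_mem_of_not_mem hyC huC |>.symm
  have hzu : z ≠ u := by
    rintro rfl
    simp [x, hxy.ne] at hψz
  have hzx : z ≠ x := by
    rintro rfl
    simp [hψψu, huC, huy] at hψz
  have hm := hq.insert_pair (u := u) (z := x) (by simp [huy, hzu.symm, huC])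
    (by simp [hxy.ne, hzx.symm]) hadj
  have hset : (insert u (insert x ↑(insert y (insert z (C \ {x, y})))) : Set V) =
      ↑(insert u (insert z C)) := by
    ext v
    simp only [coe_insert, coe_sdiff, Set.mem_insert_iff, mem_coe, Set.mem_sdiff]
    grind
  rw [hset] at hm
  refine ⟨z, _, fun hz => hzC (mem_sdiff.2 ⟨hz, by simp [hzx, hzy]⟩), hzu, ?_, hm⟩
  simp only [mem_insert, mem_sdiff] at hψz ⊢
  exact Or.inr (hψz.elim (· ▸ hyC) (·.1))
termination_by #C

theorem AllButOneMatchable.exists_isPairedDomSet_ncard_le [Fintype V] [Nontrivial V]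
    (hG : G.AllButOneMatchable) (F C : Finset V) {p : V → V} (hF : IsDomSet G F) (hCF : C ⊆ F)
    (hp : G.IsMatchingOn C p) : ∃ D, IsPairedDomSet G D ∧ D.ncard ≤ #F + #(F \ C) := by
  obtain hFC | ⟨u, hu⟩ := (F \ C).eq_empty_or_nonempty
  · obtain rfl : F = C := hCF.antisymm' (sdiff_eq_empty_iff_subset.1 hFC)
    exact ⟨F, isPairedDomSet_iff_exists_isMatchingOn.2 ⟨hF, p, hp⟩, by simp⟩
  obtain ⟨huF, huC⟩ := mem_sdiff.1 hu
  by_cases hfull : ∀ v, v ∈ F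
  · obtain ⟨D, hD⟩ := hG.exists_isPairedDomSet
    refine ⟨D, hD, D.ncard_le_card.trans ?_⟩
    rw [Nat.card_eq_fintype_card, ← card_univ, eq_univ_of_forall hfull]
    exact le_self_add
  obtain ⟨v₀, hv₀⟩ := not_forall.1 hfull
  obtain ⟨S, ψ, hψ, hS⟩ := hG v₀
  have hFS : ∀ v ∈ F, v ∈ S := fun v hv => hS v (ne_of_mem_of_not_mem hv hv₀)
  obtain ⟨z, q, hzC, hzu, -, hq⟩ :=
    hψ.exists_augment C hp (fun v hv => hFS v (hCF hv)) (hFS u huF) huC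
  have hsub : insert z F \ insert u (insert z C) ⊆ (F \ C).erase u := by
    intro v
    simp only [mem_sdiff, mem_insert, mem_erase]
    tauto
  have hlt : #(insert z F \ insert u (insert z C)) < #(F \ C) :=
    (card_le_card hsub).trans_lt (card_erase_lt_of_mem hu)
  obtain ⟨D, hD, hcard⟩ := hG.exists_isPairedDomSet_ncard_le (insert z F)
    (insert u (insert z C)) (hF.mono (by simp [Set.subset_insert]))
    (by simp [insert_subset_iff, huF, hCF.trans (subset_insert z F)]) hq
  refine ⟨D, hD, hcard.trans ?_⟩
  have := card_insert_le z F
  omega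
termination_by #(F \ C)

end Matching

section Contraction

structure IsContraction (G' : SimpleGraph α) (G : SimpleGraph V) (φ : α → V) (s : V → α) :
    Prop where
  leftInverse : Function.LeftInverse φ s
  adj : ∀ ⦃a b⦄, G'.Adj a b → φ a = φ b ∨ G.Adj (φ a) (φ b)
  eq_of_ne_section : ∀ ⦃a b⦄, φ a = φ b → a ≠ s (φ a) → b ≠ s (φ b) → a = b

namespace IsContraction

variable {G' : SimpleGraph α} {G : SimpleGraph V} {φ : α → V} {s : V → α}

theorem isDomSet_image (h : IsContraction G' G φ s) {D : Set α} (hD : IsDomSet G' D) :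
    IsDomSet G (φ '' D) := by
  intro v hv
  obtain ⟨a, ha, hadj⟩ := hD (s v) fun hs => hv ⟨s v, hs, h.leftInverse v⟩
  refine ⟨φ a, ⟨a, ha, rfl⟩, ?_⟩
  rw [← h.leftInverse v]
  exact (h.adj hadj).resolve_left fun heq => hv ⟨a, ha, by rw [← heq, h.leftInverse]⟩

variable [DecidableEq α] [DecidableEq V]

theorem exists_injOn_image_eq (h : IsContraction G' G φ s) (A : Finset α) :
    ∃ A₀ ⊆ A, Set.InjOn φ A₀ ∧ A₀.image φ = A.image φ := by
  refine ⟨A.filter fun a => a = s (φ a) ∨ s (φ a) ∉ A, filter_subset _ _, ?_, ?_⟩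
  · intro a ha b hb hab
    rw [mem_coe, mem_filter] at ha hb
    by_cases has : a = s (φ a)
    · rcases hb.2 with hbs | hbs
      · rw [hbs, ← hab, ← has]
      · exact absurd (hab ▸ has ▸ ha.1) hbs
    by_cases hbs : b = s (φ b)
    · rcases ha.2 with has' | has'
      · exact absurd has' has
      · exact absurd (hab ▸ hbs ▸ hb.1) has'
    exact h.eq_of_ne_section hab has hbs
  · refine (image_subset_image (filter_subset _ _)).antisymm fun v hv => ?_
    obtain ⟨a, ha, rfl⟩ := mem_image.1 hv
    by_cases hmem : a = s (φ a) ∨ s (φ a) ∉ A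
    · exact mem_image_of_mem φ (mem_filter.2 ⟨ha, hmem⟩)
    · refine mem_image.2 ⟨s (φ a), mem_filter.2 ⟨?_, Or.inl ?_⟩, h.leftInverse _⟩
      · tauto
      · rw [h.leftInverse]

theorem exists_isMatchingOn_image (h : IsContraction G' G φ s) (A : Finset α) {μ : α → α}
    (hμ : G'.IsMatchingOn A μ) :
    ∃ C ⊆ A.image φ, ∃ p, G.IsMatchingOn C p ∧
      #(A.image φ) + #(A.image φ \ C) ≤ #A := by
  obtain ⟨A₀, hA₀A, hinj, himage⟩ := h.exists_injOn_image_eq A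
  set K := A₀.filter fun a => μ a ∈ A₀
  have hKA₀ : K ⊆ A₀ := filter_subset _ _
  have hK : G'.IsMatchingOn K μ := by
    simpa [K] using hμ.restrict (coe_subset.2 hA₀A)
  obtain ⟨p, hp⟩ := hK.image (hinj.mono (coe_subset.2 hKA₀)) h.adj
  refine ⟨K.image φ, himage ▸ image_subset_image hKA₀, p, by simpa using hp, ?_⟩
  have hout : #(A₀ \ K) ≤ #(A \ A₀) := by
    refine card_le_card_of_injOn μ (fun a ha => ?_) (fun a ha b hb hab => ?_)
    · simp only [coe_sdiff, Set.mem_sdiff, mem_coe, K, mem_filter] at ha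
      exact mem_sdiff.2 ⟨(hμ a (hA₀A ha.1)).1, fun h => ha.2 ⟨ha.1, h⟩⟩
    · simp only [coe_sdiff, Set.mem_sdiff, mem_coe] at ha hb
      rw [← (hμ a (hA₀A ha.1)).2.1, hab, (hμ b (hA₀A hb.1)).2.1]
  rw [card_sdiff_of_subset hKA₀, card_sdiff_of_subset hA₀A] at hout
  rw [← himage, card_sdiff_of_subset (image_subset_image hKA₀), card_image_of_injOn hinj,
    card_image_of_injOn (hinj.mono (coe_subset.2 hKA₀))]
  have := card_le_card hKA₀
  have := card_le_card hA₀A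
  omega

end IsContraction

theorem pairedDomNum_le_of_isContraction [Finite α] [Fintype V] [Nontrivial V]
    {G' : SimpleGraph α} {G : SimpleGraph V} {φ : α → V} {s : V → α}
    (h : IsContraction G' G φ s) (hG : G.AllButOneMatchable) (hG' : ∃ D, IsPairedDomSet G' D) :
    pairedDomNum G ≤ pairedDomNum G' := by
  classical
  obtain ⟨D₀, hD₀⟩ := hG'
  obtain ⟨D', hD', hcard⟩ :=
    Nat.sInf_mem (s := {k | ∃ D, IsPairedDomSet G' D ∧ D.ncard = k}) ⟨_, D₀, hD₀, rfl⟩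
  obtain ⟨A, rfl⟩ := D'.toFinite.exists_finset_coe
  obtain ⟨hdom, μ, hμ⟩ := isPairedDomSet_iff_exists_isMatchingOn.1 hD'
  obtain ⟨C, hCF, p, hp, hcardC⟩ := h.exists_isMatchingOn_image A hμ
  obtain ⟨D, hD, hDcard⟩ := hG.exists_isPairedDomSet_ncard_le (A.image φ) C
    (by simpa using h.isDomSet_image hdom) hCF hp
  calc pairedDomNum G ≤ D.ncard := Nat.sInf_le ⟨D, hD, rfl⟩
    _ ≤ #A := hDcard.trans hcardC
    _ = pairedDomNum G' := by rw [← Set.ncard_coe_finset A]; exact hcard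

end Contraction

section BoxProd

variable {G G' : SimpleGraph α} {H : SimpleGraph β}

theorem IsMatchingOn.boxProd {S : Set α} {T : Set β} {ψ : α → α} {χ : β → β}
    [DecidablePred (· ∈ S)] (hψ : G.IsMatchingOn S ψ) (hχ : H.IsMatchingOn T χ) :
    (G □ H).IsMatchingOn (S ×ˢ Set.univ ∪ Sᶜ ×ˢ T)
      fun v => if v.1 ∈ S then (ψ v.1, v.2) else (v.1, χ v.2) := by
  rintro ⟨x, y⟩ hv
  by_cases hx : x ∈ S
  · obtain ⟨hψx, hψψx, hadj⟩ := hψ x hx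
    simp [hx, hψx, hψψx, hadj]
  · have hy : y ∈ T := by simpa [hx] using hv
    obtain ⟨hχy, hχχy, hadj⟩ := hχ y hy
    simp [hx, hχy, hχχy, hadj]

theorem AllButOneMatchable.boxProd (hG : G.AllButOneMatchable) (hH : H.AllButOneMatchable) :
    (G □ H).AllButOneMatchable := by
  classical
  rintro ⟨x₀, y₀⟩
  obtain ⟨S, ψ, hψ, hS⟩ := hG x₀
  obtain ⟨T, χ, hχ, hT⟩ := hH y₀
  refine ⟨_, _, hψ.boxProd hχ, fun ⟨x, y⟩ hne => ?_⟩
  by_cases hx : x ∈ S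
  · exact Or.inl ⟨hx, trivial⟩
  · obtain rfl : x = x₀ := by_contra fun h => hx (hS x h)
    exact Or.inr ⟨hx, hT y fun hy => hne (hy ▸ rfl)⟩

theorem IsContraction.boxProd_right {φ : α → V} {s : V → α} {G : SimpleGraph V}
    (h : IsContraction G' G φ s) (H : SimpleGraph β) :
    IsContraction (G' □ H) (G □ H) (Prod.map φ id) (Prod.map s id) where
  leftInverse v := Prod.ext (h.leftInverse v.1) rfl
  adj a b hab := by
    rcases boxProd_adj.1 hab with ⟨hadj, h2⟩ | ⟨hadj, h1⟩
    · rcases h.adj hadj with heq | hadj'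
      · exact Or.inl (Prod.ext heq h2)
      · exact Or.inr (boxProd_adj.2 (Or.inl ⟨hadj', h2⟩))
    · exact Or.inr (boxProd_adj.2 (Or.inr ⟨hadj, congrArg φ h1⟩))
  eq_of_ne_section a b hab ha hb := by
    simp only [Prod.ext_iff, Prod.map_fst, Prod.map_snd, id] at hab
    exact Prod.ext (h.eq_of_ne_section hab.1 (fun h => ha (Prod.ext h rfl))
      (fun h => hb (Prod.ext h rfl))) hab.2

end BoxProd

section Cycle

variable {n : ℕ}

theorem isMatchingOn_zmod [Fact (1 < n)] :
    (circulantGraph ({1} : Set (ZMod n))).IsMatchingOn {x | Even n ∨ x ≠ 0}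
      fun x => if x.val % 2 = 1 then x + 1 else x - 1 := by
  have hadj : ∀ x : ZMod n, (circulantGraph {1}).Adj x (x + 1) := by
    simp [circulantGraph_adj]
  have hval : ∀ x : ZMod n, x.val ≠ 0 → x ∈ {x : ZMod n | Even n ∨ x ≠ 0} := fun x hx =>
    Or.inr ((ZMod.val_ne_zero x).1 hx)
  rintro x hx
  have hxn := x.val_lt
  rcases Nat.mod_two_eq_zero_or_one x.val with hpar | hpar
  · have hdown : x - 1 + 1 = x := sub_add_cancel x 1
    have hx1 : (x - 1).val % 2 = 1 := by
      rcases eq_or_ne x 0 with rfl | hx0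
      · rw [zero_sub, ZMod.neg_val, if_neg one_ne_zero, ZMod.val_one]
        have := Nat.even_iff.1 (hx.resolve_right (not_not.2 rfl))
        omega
      · have := (ZMod.val_ne_zero x).2 hx0
        rw [ZMod.val_sub (by rw [ZMod.val_one]; omega), ZMod.val_one]
        omega
    simp only [hpar, hx1, if_true, zero_ne_one, if_false, hdown]
    exact ⟨hval _ (by omega), trivial, by simpa only [hdown] using (hadj (x - 1)).symm⟩
  · have hup : x + 1 - 1 = x := add_sub_cancel_right x 1
    have hval_add : (x + 1).val = (x.val + 1) % n := by rw [ZMod.val_add, ZMod.val_one]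
    have hx1 : (x + 1).val % 2 = 0 := by
      rw [hval_add]
      rcases (Nat.add_one_le_of_lt hxn).lt_or_eq with h | h
      · rw [Nat.mod_eq_of_lt h]; omega
      · rw [h, Nat.mod_self]
    simp only [hpar, hx1, if_true, zero_ne_one, if_false, hup]
    refine ⟨?_, trivial, hadj x⟩
    rcases (Nat.add_one_le_of_lt hxn).lt_or_eq with h | h
    · exact hval _ (by rw [hval_add, Nat.mod_eq_of_lt h]; omega)
    · exact Or.inl (Nat.even_iff.2 (by omega))

theorem allButOneMatchable_zmod [Fact (1 < n)] :
    (circulantGraph ({1} : Set (ZMod n))).AllButOneMatchable :=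
  AllButOneMatchable.of_forall_iso isMatchingOn_zmod (fun _ hx => Or.inr hx)
    fun v => ⟨⟨Equiv.addRight v, circulantGraph_adj_translate⟩, zero_add v⟩

theorem _root_.ZMod.natCast_val_add_one_eq_or [NeZero n] (x : ZMod (n + 1)) :
    ((x + 1).val : ZMod n) = (x.val : ZMod n) + 1 ∨ ((x + 1).val : ZMod n) = x.val := by
  have : Fact (1 < n + 1) := ⟨Nat.lt_add_of_pos_left (NeZero.pos n)⟩
  rcases (Nat.lt_succ_iff.1 x.val_lt).lt_or_eq with hx | hx
  · left
    rw [ZMod.val_add_of_lt (by rw [ZMod.val_one]; omega), ZMod.val_one, Nat.cast_succ]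
  · right
    have : x + 1 = 0 := by
      rw [← ZMod.natCast_zmod_val x, hx]
      exact_mod_cast ZMod.natCast_self (n + 1)
    rw [this, hx]
    simp

theorem _root_.ZMod.val_eq_of_ne_natCast_val_natCast_val {x : ZMod (n + 1)}
    (hx : x ≠ ((x.val : ZMod n).val : ZMod (n + 1))) : x.val = n := by
  refine (Nat.lt_succ_iff.1 x.val_lt).eq_of_not_lt fun hlt => hx ?_
  rw [ZMod.val_natCast_of_lt hlt, ZMod.natCast_zmod_val]

theorem isContraction_zmod_succ [NeZero n] :
    IsContraction (circulantGraph ({1} : Set (ZMod (n + 1)))) (circulantGraph {1})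
      (fun x => (x.val : ZMod n)) (fun w => (w.val : ZMod (n + 1))) where
  leftInverse w := by
    simp only [ZMod.val_natCast_of_lt (w.val_lt.trans n.lt_succ_self), ZMod.natCast_zmod_val]
  adj := by
    suffices key : ∀ x : ZMod (n + 1), (x.val : ZMod n) = ((x + 1).val : ZMod n) ∨
        (circulantGraph {1}).Adj (x.val : ZMod n) ((x + 1).val : ZMod n) by
      rintro a b ⟨-, hab⟩
      simp only [Set.mem_singleton_iff, sub_eq_iff_eq_add'] at hab
      rcases hab with rfl | rfl
      · exact (key b).imp Eq.symm Adj.symm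
      · exact key a
    intro x
    rcases ZMod.natCast_val_add_one_eq_or x with h | h
    · by_cases heq : (x.val : ZMod n) = ((x + 1).val : ZMod n)
      · exact Or.inl heq
      · rw [h] at heq ⊢
        exact Or.inr (by rw [circulantGraph_adj]; exact ⟨heq, Or.inr (by simp)⟩)
    · exact Or.inl h.symm
  eq_of_ne_section a b _ ha hb :=
    ZMod.val_injective _ ((ZMod.val_eq_of_ne_natCast_val_natCast_val ha).trans
      (ZMod.val_eq_of_ne_natCast_val_natCast_val hb).symm)

end Cycle

end SimpleGraph

theorem torusGraph_eq_boxProd (n m : ℕ) :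
    torusGraph n m =
      circulantGraph ({1} : Set (ZMod n)) □ circulantGraph ({1} : Set (ZMod m)) := by
  ext ⟨a₁, a₂⟩ ⟨b₁, b₂⟩
  simp only [torusGraph, boxProd_adj, circulantGraph_adj, Set.mem_singleton_iff,
    sub_eq_iff_eq_add, ne_eq, Prod.mk.injEq]
  grind

theorem stmt12 (n m : ℕ) (hn : 3 ≤ n) (hm : 3 ≤ m) :
    pairedDomNum (torusGraph n m) ≤ pairedDomNum (torusGraph (n + 1) m) := by
  have : Fact (1 < n) := ⟨by omega⟩
  have : Fact (1 < n + 1) := ⟨by omega⟩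
  have : Fact (1 < m) := ⟨by omega⟩
  rw [torusGraph_eq_boxProd, torusGraph_eq_boxProd]
  exact pairedDomNum_le_of_isContraction (isContraction_zmod_succ.boxProd_right _)
    (allButOneMatchable_zmod.boxProd allButOneMatchable_zmod)
    (allButOneMatchable_zmod.boxProd allButOneMatchable_zmod).exists_isPairedDomSet
end

section
/- For m ≡ 0 (mod 4) and n ≡ 1 (mod 4) with n, m ≥ 5, the paired domination number of C_n × C_m is at most (n+1)m/4. -/
open SimpleGraph

/-!
Take the even rows `i` of `C_n × C_m` (there are `(n + 1) / 2` of them, `n` being odd), and in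
row `i` the columns `j ≡ i, i + 1 (mod 4)`; since `4 ∣ m` this is well defined around each row.
The chosen vertices pair up as `(i, j), (i, j ± 1)`, which gives the perfect matching. A vertex of
an even row has a chosen neighbour in its own row, and a vertex of an odd row has one directly
above or below it, because the patterns of the two adjacent rows are shifted by `2 (mod 4)`.
Each even row contributes `m / 2` vertices, so the set has `(n + 1) * m / 4` vertices.
-/

open Finset

namespace ZMod

lemma card_filter_cast_eq {d N : ℕ} [NeZero N] (hd : d ∣ N) (c : ZMod d) :
    #{j : ZMod N | (cast j : ZMod d) = c} = N / d := by
  have : NeZero d := ⟨by rintro rfl; exact NeZero.ne N (zero_dvd_iff.1 hd)⟩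
  let f := (castHom hd (ZMod d)).toAddMonoidHom
  have hfiber (c' : ZMod d) : #{j | f j = c'} = #{j | f j = c} :=
    AddMonoidHom.card_fiber_eq_of_mem_range f (castHom_surjective hd c')
      (castHom_surjective hd c)
  have hsum : ∑ c' : ZMod d, #{j | f j = c'} = N := by
    rw [← card_eq_sum_card_fiberwise (by simp), card_univ, card]
  rw [sum_congr rfl fun c' _ => hfiber c', sum_const, card_univ, card, smul_eq_mul] at hsum
  exact Nat.eq_div_of_mul_eq_right (NeZero.ne d) hsum

lemma card_filter_cast_mem {d N : ℕ} [NeZero N] (hd : d ∣ N) (S : Finset (ZMod d)) :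
    #{j : ZMod N | (cast j : ZMod d) ∈ S} = #S * (N / d) := by
  rw [card_eq_sum_card_fiberwise (f := fun j : ZMod N => (cast j : ZMod d)) (t := S)
    (by intro j hj; simpa using hj), ← smul_eq_mul, ← sum_const]
  refine sum_congr rfl fun c hc => ?_
  rw [filter_filter, ← card_filter_cast_eq hd c]
  congr 1
  ext j
  simp only [mem_filter, mem_univ, true_and, and_iff_right_iff_imp]
  rintro rfl
  exact hc

lemma card_filter_even_val {n : ℕ} [NeZero n] (hn : Odd n) :
    #{i : ZMod n | Even i.val} = (n + 1) / 2 := by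
  have hval : #{i : ZMod n | Even i.val} = #{k ∈ range n | k ≡ 0 [MOD 2]} := by
    refine card_nbij' val (↑) (fun i hi => ?_) (fun k hk => ?_) (fun i _ => natCast_zmod_val i)
      (fun k hk => val_cast_of_lt (mem_range.1 (mem_filter.1 hk).1))
    · simp only [coe_filter, mem_univ, true_and, Set.mem_ofPred_eq, mem_range] at hi ⊢
      exact ⟨val_lt i, Nat.even_iff.1 hi⟩
    · simp only [coe_filter, mem_range, Set.mem_ofPred_eq, mem_univ, true_and] at hk ⊢
      rw [val_cast_of_lt hk.1]
      exact Nat.even_iff.2 hk.2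
  rw [hval, ← Nat.count_eq_card_filter_range, Nat.count_modEq_card _ two_pos]
  have := Nat.odd_iff.1 hn
  split <;> omega

end ZMod

section PairedDomination

variable {V : Type*} {G : SimpleGraph V}

theorem SimpleGraph.exists_isPerfectMatching_of_involutive {σ : V → V}
    (hσ : Function.Involutive σ) (hadj : ∀ v, G.Adj v (σ v)) :
    ∃ M : G.Subgraph, M.IsPerfectMatching := by
  let M : G.Subgraph :=
    { verts := Set.univ
      Adj := fun v w => w = σ v
      adj_sub := by rintro v _ rfl; exact hadj v
      edge_vert := fun _ => Set.mem_univ _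
      symm := ⟨fun v w (h : w = σ v) => show v = σ w by rw [h, hσ v]⟩ }
  exact ⟨M, Subgraph.isPerfectMatching_iff.2 fun v => existsUnique_eq (a' := σ v)⟩

theorem isPairedDomSet_of_involution {D : Set V} (hD : IsDomSet G D) {σ : V → V}
    (hmaps : Set.MapsTo σ D D) (hσ : ∀ v ∈ D, σ (σ v) = v)
    (hadj : ∀ v ∈ D, G.Adj v (σ v)) : IsPairedDomSet G D :=
  ⟨hD, exists_isPerfectMatching_of_involutive (σ := hmaps.restrict σ D D)
    (fun v => Subtype.ext (hσ v v.2)) (fun v => hadj v v.2)⟩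

theorem pairedDomNum_le_ncard {D : Set V} (hD : IsPairedDomSet G D) :
    pairedDomNum G ≤ D.ncard :=
  Nat.sInf_le ⟨D, hD, rfl⟩

end PairedDomination

section Torus

variable {n m : ℕ}

theorem torusGraph_adj_snd_add_one [Nontrivial (ZMod m)] (i : ZMod n) (j : ZMod m) :
    (torusGraph n m).Adj (i, j) (i, j + 1) :=
  ⟨by simp, Or.inl ⟨rfl, Or.inr rfl⟩⟩

theorem torusGraph_adj_snd_sub_one [Nontrivial (ZMod m)] (i : ZMod n) (j : ZMod m) :
    (torusGraph n m).Adj (i, j) (i, j - 1) := by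
  have := (torusGraph_adj_snd_add_one i (j - 1)).symm
  rwa [sub_add_cancel] at this

theorem torusGraph_adj_fst_add_one [Nontrivial (ZMod n)] (i : ZMod n) (j : ZMod m) :
    (torusGraph n m).Adj (i, j) (i + 1, j) :=
  ⟨by simp, Or.inr ⟨rfl, Or.inr rfl⟩⟩

def torusOffset (v : ZMod n × ZMod m) : ZMod 4 :=
  ZMod.cast v.2 - (v.1.val : ZMod 4)

def torusPattern (n m : ℕ) : Set (ZMod n × ZMod m) :=
  {v | Even v.1.val ∧ torusOffset v ∈ ({0, 1} : Finset (ZMod 4))}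

theorem torusOffset_snd_add_one (hm : 4 ∣ m) (i : ZMod n) (j : ZMod m) :
    torusOffset (i, j + 1) = torusOffset (i, j) + 1 := by
  simp only [torusOffset, ZMod.cast_add hm, ZMod.cast_one hm]
  ring

theorem torusOffset_snd_sub_one (hm : 4 ∣ m) (i : ZMod n) (j : ZMod m) :
    torusOffset (i, j - 1) = torusOffset (i, j) - 1 := by
  simp only [torusOffset, ZMod.cast_sub hm, ZMod.cast_one hm]
  ring

theorem torusOffset_natCast_fst {k : ℕ} (hk : k < n) (j : ZMod m) :
    torusOffset ((k : ZMod n), j) = ZMod.cast j - k := by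
  rw [torusOffset, ZMod.val_cast_of_lt hk]

/- The neighbours of a vertex of offset `x` to its left and right, or below and above it, have
offsets `x - 1` and `x + 1`. -/
theorem ZMod.sub_one_mem_or_add_one_mem_zero_one (x : ZMod 4) :
    x - 1 ∈ ({0, 1} : Finset (ZMod 4)) ∨ x + 1 ∈ ({0, 1} : Finset (ZMod 4)) := by
  revert x
  decide

theorem exists_adj_mem_torusPattern_of_odd [Nontrivial (ZMod m)] (hn : Odd n) {k : ℕ}
    (hk : Odd k) (hkn : k < n) (j : ZMod m) :
    ∃ u ∈ torusPattern n m, (torusGraph n m).Adj ((k : ZMod n), j) u := by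
  have hk1 : k + 1 < n := by
    obtain ⟨a, rfl⟩ := hk
    obtain ⟨b, rfl⟩ := hn
    omega
  have : Nontrivial (ZMod n) := ZMod.nontrivial_iff.2 (by omega)
  rcases ZMod.sub_one_mem_or_add_one_mem_zero_one (ZMod.cast j - k) with h | h
  · refine ⟨((k + 1 : ℕ), j), ⟨?_, ?_⟩, ?_⟩
    · rw [ZMod.val_cast_of_lt hk1]; exact hk.add_one
    · rwa [torusOffset_natCast_fst hk1, Nat.cast_succ, ← sub_sub]
    · rw [Nat.cast_succ]; exact torusGraph_adj_fst_add_one _ j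
  · have hk0 : 1 ≤ k := hk.pos
    refine ⟨((k - 1 : ℕ), j), ⟨?_, ?_⟩, ?_⟩
    · rw [ZMod.val_cast_of_lt (by omega)]; exact Nat.Odd.sub_odd hk odd_one
    · rwa [torusOffset_natCast_fst (by omega), Nat.cast_sub hk0, Nat.cast_one, sub_sub_eq_add_sub,
        add_sub_right_comm]
    · have := (torusGraph_adj_fst_add_one (m := m) ((k - 1 : ℕ) : ZMod n) j).symm
      rwa [← Nat.cast_add_one, Nat.sub_add_cancel hk0] at this

theorem isTotalDomSet_torusPattern [Nontrivial (ZMod m)] (hn : Odd n) (hm : 4 ∣ m) :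
    IsTotalDomSet (torusGraph n m) (torusPattern n m) := by
  have : NeZero n := ⟨hn.pos.ne'⟩
  rintro ⟨i, j⟩
  rcases Nat.even_or_odd i.val with hi | hi
  · rcases ZMod.sub_one_mem_or_add_one_mem_zero_one (torusOffset (i, j)) with h | h
    · exact ⟨(i, j - 1), ⟨hi, by rwa [torusOffset_snd_sub_one hm]⟩,
        torusGraph_adj_snd_sub_one i j⟩
    · exact ⟨(i, j + 1), ⟨hi, by rwa [torusOffset_snd_add_one hm]⟩,
        torusGraph_adj_snd_add_one i j⟩
  · rw [← ZMod.natCast_zmod_val i]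
    exact exists_adj_mem_torusPattern_of_odd hn hi i.val_lt j

def torusPartner (v : ZMod n × ZMod m) : ZMod n × ZMod m :=
  if torusOffset v = 0 then (v.1, v.2 + 1) else (v.1, v.2 - 1)

theorem torusPartner_of_torusOffset_eq_zero {v : ZMod n × ZMod m} (h : torusOffset v = 0) :
    torusPartner v = (v.1, v.2 + 1) :=
  if_pos h

theorem torusPartner_of_torusOffset_eq_one {v : ZMod n × ZMod m} (h : torusOffset v = 1) :
    torusPartner v = (v.1, v.2 - 1) :=
  if_neg (h ▸ by decide)

theorem isPairedDomSet_torusPattern [Nontrivial (ZMod m)] (hn : Odd n) (hm : 4 ∣ m) :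
    IsPairedDomSet (torusGraph n m) (torusPattern n m) := by
  have hpattern : ∀ v ∈ torusPattern n m, torusOffset v = 0 ∨ torusOffset v = 1 := by
    rintro v ⟨-, hv⟩
    simpa using hv
  refine isPairedDomSet_of_involution (fun v _ => isTotalDomSet_torusPattern hn hm v)
    (σ := torusPartner) ?_ ?_ ?_
  all_goals
    rintro ⟨i, j⟩ hv
    rcases hpattern _ hv with h | h
  · rw [torusPartner_of_torusOffset_eq_zero h]
    exact ⟨hv.1, by rw [torusOffset_snd_add_one hm, h]; decide⟩
  · rw [torusPartner_of_torusOffset_eq_one h]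
    exact ⟨hv.1, by rw [torusOffset_snd_sub_one hm, h]; decide⟩
  · rw [torusPartner_of_torusOffset_eq_zero h, torusPartner_of_torusOffset_eq_one
      (by rw [torusOffset_snd_add_one hm, h]; decide), add_sub_cancel_right]
  · rw [torusPartner_of_torusOffset_eq_one h, torusPartner_of_torusOffset_eq_zero
      (by rw [torusOffset_snd_sub_one hm, h]; decide), sub_add_cancel]
  · rw [torusPartner_of_torusOffset_eq_zero h]
    exact torusGraph_adj_snd_add_one i j
  · rw [torusPartner_of_torusOffset_eq_one h]
    exact torusGraph_adj_snd_sub_one i j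

theorem ncard_torusPattern [NeZero m] (hn : Odd n) (hm : 4 ∣ m) :
    (torusPattern n m).ncard = (n + 1) * m / 4 := by
  have : NeZero n := ⟨hn.pos.ne'⟩
  let e : ZMod n × ZMod m ≃ ZMod n × ZMod m :=
    Equiv.prodShear (Equiv.refl _) fun i => Equiv.subRight (i.val : ZMod m)
  have hshear : torusPattern n m =
      e ⁻¹' ({i | Even i.val} ×ˢ {j | ZMod.cast j ∈ ({0, 1} : Finset (ZMod 4))}) := by
    ext ⟨i, j⟩
    simp only [torusPattern, torusOffset, e, Set.mem_ofPred_eq, Set.mem_preimage, Set.mem_prod,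
      Equiv.prodShear_apply, Equiv.coe_refl, id, Equiv.subRight_apply, ZMod.cast_sub hm,
      ZMod.cast_natCast hm]
  rw [hshear,
    Set.ncard_preimage_of_injective_subset_range e.injective (by simp [e.range_eq_univ]),
    Set.ncard_prod, Set.ncard_eq_toFinset_card', Set.ncard_eq_toFinset_card', Set.toFinset_ofPred,
    Set.toFinset_ofPred, ZMod.card_filter_even_val hn, ZMod.card_filter_cast_mem hm]
  obtain ⟨a, rfl⟩ := hn
  obtain ⟨b, rfl⟩ := hm
  rw [show #({0, 1} : Finset (ZMod 4)) = 2 from rfl,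
    show (2 * a + 1 + 1) * (4 * b) = 4 * ((a + 1) * (2 * b)) by ring,
    Nat.mul_div_cancel_left _ four_pos, show (2 * a + 1 + 1) / 2 = a + 1 by omega,
    Nat.mul_div_cancel_left _ four_pos]

end Torus

theorem stmt14_general (n m : ℕ) (hm : 5 ≤ m) (h1 : m % 4 = 0) (h2 : n % 4 = 1) :
    pairedDomNum (torusGraph n m) ≤ (n + 1) * m / 4 := by
  have : NeZero m := ⟨by omega⟩
  have : Nontrivial (ZMod m) := ZMod.nontrivial_iff.2 (by omega)
  have hn : Odd n := Nat.odd_iff.2 (by omega)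
  have hm4 : 4 ∣ m := Nat.dvd_of_mod_eq_zero h1
  calc pairedDomNum (torusGraph n m)
      ≤ (torusPattern n m).ncard := pairedDomNum_le_ncard (isPairedDomSet_torusPattern hn hm4)
    _ = (n + 1) * m / 4 := ncard_torusPattern hn hm4

theorem stmt14 (n m : ℕ) (hn : 5 ≤ n) (hm : 5 ≤ m) (h1 : m % 4 = 0) (h2 : n % 4 = 1) :
    pairedDomNum (torusGraph n m) ≤ (n + 1) * m / 4 :=
  stmt14_general n m hm h1 h2
end
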